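/- arXiv:2010.04893 — 4 statements merged into one kernel-verified Lean document; each statement's English description precedes it below -/
import Mathlib

section
/- Let p and q be Markov transition kernels on a finite state space, and let p_t, q_t be distributions evolving as p_{t+1}(x') = Σ_x p(x'|x) p_t(x) and q_{t+1}(x') = Σ_x q(x'|x) q_t(x). Then D_TV[p_{t+1}, q_{t+1}] ≤ D_TV[p_t, q_t] + E_{x∼q_t}[D_TV[p(·|x), q(·|x)]]. -/
/-- Total-variation distance between two pmfs on a finite type. -/
noncomputable def tv {X : Type*} [Fintype X] (f g : X → ℝ) : ℝ :=
  (1 / 2) * ∑ x, |f x - g x|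

/-- One step of two Markov chains: the TV distance grows by at most the
expected (under `qt`) TV distance between the transition kernels. -/
theorem stmt_1 {X : Type*} [Fintype X]
    (p q : X → X → ℝ)   -- kernels: `p x x'` = probability of `x'` given `x`
    (pt qt : X → ℝ)
    (hp0 : ∀ x x', 0 ≤ p x x') (hq0 : ∀ x x', 0 ≤ q x x')
    (hp1 : ∀ x, ∑ x', p x x' = 1) (hq1 : ∀ x, ∑ x', q x x' = 1)
    (hpt0 : ∀ x, 0 ≤ pt x) (hqt0 : ∀ x, 0 ≤ qt x)
    (hpt1 : ∑ x, pt x = 1) (hqt1 : ∑ x, qt x = 1) :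
    tv (fun x' => ∑ x, p x x' * pt x) (fun x' => ∑ x, q x x' * qt x)
      ≤ tv pt qt + ∑ x, qt x * tv (p x) (q x) := by
  have key : ∑ x', |(∑ x, p x x' * pt x) - ∑ x, q x x' * qt x|
      ≤ (∑ x, |pt x - qt x|) + ∑ x, qt x * ∑ x', |p x x' - q x x'| := by
    have h1 : ∀ x', |(∑ x, p x x' * pt x) - ∑ x, q x x' * qt x|
        ≤ ∑ x, (p x x' * |pt x - qt x| + |p x x' - q x x'| * qt x) := by
      intro x'
      have heq : (∑ x, p x x' * pt x) - ∑ x, q x x' * qt x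
          = ∑ x, (p x x' * (pt x - qt x) + (p x x' - q x x') * qt x) := by
        rw [← Finset.sum_sub_distrib]
        exact Finset.sum_congr rfl fun x _ => by ring
      rw [heq]
      refine (Finset.abs_sum_le_sum_abs _ _).trans (Finset.sum_le_sum fun x _ => ?_)
      refine (abs_add_le _ _).trans ?_
      rw [abs_mul, abs_mul, abs_of_nonneg (hp0 x x'), abs_of_nonneg (hqt0 x)]
    calc ∑ x', |(∑ x, p x x' * pt x) - ∑ x, q x x' * qt x|
        ≤ ∑ x', ∑ x, (p x x' * |pt x - qt x| + |p x x' - q x x'| * qt x) :=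
          Finset.sum_le_sum fun x' _ => h1 x'
      _ = (∑ x, |pt x - qt x|) + ∑ x, qt x * ∑ x', |p x x' - q x x'| := by
          rw [Finset.sum_comm]
          rw [← Finset.sum_add_distrib]
          refine Finset.sum_congr rfl fun x _ => ?_
          rw [Finset.sum_add_distrib, ← Finset.sum_mul, hp1, one_mul,
            ← Finset.sum_mul, Finset.mul_sum, Finset.sum_mul]
          exact congrArg _ (Finset.sum_congr rfl fun x' _ => mul_comm _ _)
  simp only [tv]
  have hr : ∑ x, qt x * ((1/2) * ∑ x', |p x x' - q x x'|)
      = (1/2) * ∑ x, qt x * ∑ x', |p x x' - q x x'| := by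
    rw [Finset.mul_sum]
    exact Finset.sum_congr rfl fun x _ => by ring
  rw [hr]
  linarith
end

section
/- Suppose for each t ≥ 0, the state-action distributions satisfy D_TV[p_t^π, q_t^π̃] ≤ D_TV[p_{t-1}^π, q_{t-1}^π̃] + δ_t + ε_π for t ≥ 1, with D_TV[p_0^π, q_0^π̃] ≤ δ_0 + ε_π, where δ_t ≥ 0 and ε_π ≥ 0. Then for any T and any γ ∈ (0,1), the partial discounted returns J_T(π) = Σ_{t=0}^T γ^t E_{p_t^π}[r] and J̃_T(π̃) = Σ_{t=0}^T γ^t E_{q_t^π̃}[r], with |r| ≤ r_max, satisfy |J_T(π) - J̃_T(π̃)| ≤ 2 r_max ( ε_π/(1-γ)² + (1/(1-γ)) Σ_{t=0}^T γ^t δ_t ). -/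
lemma geo_identity (γ : ℝ) (n : ℕ) :
    (1 - γ) ^ 2 * ∑ t ∈ Finset.range n, (t + 1 : ℝ) * γ ^ t
      = 1 - (n + 1) * γ ^ n + n * γ ^ (n + 1) := by
  induction n with
  | zero => simp
  | succ m ih =>
    rw [Finset.sum_range_succ, mul_add, ih]
    push_cast
    ring

lemma geo_sum_le {γ : ℝ} (hγ0 : 0 ≤ γ) (hγ1 : γ < 1) (n : ℕ) :
    ∑ t ∈ Finset.range n, γ ^ t ≤ 1 / (1 - γ) := by
  have h1γ : 0 < 1 - γ := by linarith
  have hid : (1 - γ) * ∑ t ∈ Finset.range n, γ ^ t = 1 - γ ^ n := by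
    linear_combination -geom_sum_mul γ n
  rw [le_div_iff₀ h1γ]
  nlinarith [pow_nonneg hγ0 n]

lemma arith_geo_sum_le {γ : ℝ} (hγ0 : 0 ≤ γ) (hγ1 : γ < 1) (n : ℕ) :
    ∑ t ∈ Finset.range n, (t + 1 : ℝ) * γ ^ t ≤ 1 / (1 - γ) ^ 2 := by
  have h1γ' : 0 < 1 - γ := by linarith
  have h1γ : 0 < (1 - γ) ^ 2 := by positivity
  rw [le_div_iff₀ h1γ, mul_comm, geo_identity γ n]
  have key : 0 ≤ γ ^ n * ((n : ℝ) * (1 - γ) + 1) :=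
    mul_nonneg (pow_nonneg hγ0 n) (by nlinarith [Nat.cast_nonneg (α := ℝ) n])
  rw [pow_succ]
  nlinarith [key]

/-- If the TV distance between the step-`t` state-action distributions grows by
at most `δ t + ε` per step, then the partial discounted returns differ by at
most `2 r_max (ε/(1-γ)² + (1/(1-γ)) Σ_{t≤T} γ^t δ t)`. -/
theorem stmt_3 {S A : Type*} [Fintype S] [Fintype A]
    (p q : ℕ → S × A → ℝ)   -- `p t` = distribution of (s_t,a_t) under (p,π), `q t` under (p̃,π̃)
    (hp0 : ∀ t sa, 0 ≤ p t sa) (hq0 : ∀ t sa, 0 ≤ q t sa)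
    (hp1 : ∀ t, ∑ sa, p t sa = 1) (hq1 : ∀ t, ∑ sa, q t sa = 1)
    (r : S × A → ℝ) (rmax : ℝ) (hr : ∀ sa, |r sa| ≤ rmax)
    (γ : ℝ) (hγ : γ ∈ Set.Ioo (0 : ℝ) 1)
    (δ : ℕ → ℝ) (hδ : ∀ t, 0 ≤ δ t) (ε : ℝ) (hε : 0 ≤ ε)
    (h0 : tv (p 0) (q 0) ≤ δ 0 + ε)
    (hstep : ∀ t : ℕ, 1 ≤ t → tv (p t) (q t) ≤ tv (p (t - 1)) (q (t - 1)) + δ t + ε)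
    (T : ℕ) :
    |∑ t ∈ Finset.range (T + 1), γ ^ t * ∑ sa, r sa * p t sa
      - ∑ t ∈ Finset.range (T + 1), γ ^ t * ∑ sa, r sa * q t sa|
      ≤ 2 * rmax * (ε / (1 - γ) ^ 2
          + (1 / (1 - γ)) * ∑ t ∈ Finset.range (T + 1), γ ^ t * δ t) := by
  obtain ⟨hγ0, hγ1⟩ := hγ
  have hγle : (0:ℝ) ≤ γ := le_of_lt hγ0
  have h1γ : 0 < 1 - γ := by linarith
  -- the space is nonempty
  have hne : Nonempty (S × A) := by
    by_contra h
    rw [not_nonempty_iff] at h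
    have := hp1 0
    simp at this
  have hrmax : 0 ≤ rmax := le_trans (abs_nonneg _) (hr (Classical.arbitrary _))
  -- TV bound by induction
  have htv : ∀ t, tv (p t) (q t) ≤ (∑ k ∈ Finset.range (t+1), δ k) + (t + 1 : ℝ) * ε := by
    intro t
    induction t with
    | zero => simpa using h0
    | succ n ih =>
      have hs := hstep (n+1) (by omega)
      simp only [Nat.add_sub_cancel] at hs
      rw [Finset.sum_range_succ]
      push_cast
      push_cast at ih
      linarith
  -- expectation difference bound
  have hexp : ∀ t, |(∑ sa, r sa * p t sa) - ∑ sa, r sa * q t sa|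
      ≤ 2 * rmax * tv (p t) (q t) := by
    intro t
    rw [← Finset.sum_sub_distrib]
    calc |∑ sa, (r sa * p t sa - r sa * q t sa)|
        ≤ ∑ sa, |r sa * p t sa - r sa * q t sa| := Finset.abs_sum_le_sum_abs _ _
      _ ≤ ∑ sa, rmax * |p t sa - q t sa| := by
          apply Finset.sum_le_sum
          intro sa _
          rw [← mul_sub, abs_mul]
          exact mul_le_mul_of_nonneg_right (hr sa) (abs_nonneg _)
      _ = 2 * rmax * tv (p t) (q t) := by
          rw [← Finset.mul_sum, tv]; ring
  -- combine
  have key : |∑ t ∈ Finset.range (T + 1), γ ^ t * ∑ sa, r sa * p t sa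
      - ∑ t ∈ Finset.range (T + 1), γ ^ t * ∑ sa, r sa * q t sa|
      ≤ ∑ t ∈ Finset.range (T + 1),
          γ ^ t * (2 * rmax * ((∑ k ∈ Finset.range (t+1), δ k) + (t + 1 : ℝ) * ε)) := by
    rw [← Finset.sum_sub_distrib]
    refine le_trans (Finset.abs_sum_le_sum_abs _ _) (Finset.sum_le_sum fun t _ => ?_)
    rw [← mul_sub, abs_mul, abs_pow, abs_of_nonneg hγle]
    refine mul_le_mul_of_nonneg_left ?_ (pow_nonneg hγle t)
    refine le_trans (hexp t) (mul_le_mul_of_nonneg_left (htv t) (by linarith))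
  refine le_trans key ?_
  -- rewrite the sum
  have hsplit : ∑ t ∈ Finset.range (T + 1),
      γ ^ t * (2 * rmax * ((∑ k ∈ Finset.range (t+1), δ k) + (t + 1 : ℝ) * ε))
      = 2 * rmax * ((∑ t ∈ Finset.range (T + 1), γ ^ t * ∑ k ∈ Finset.range (t+1), δ k)
          + ε * ∑ t ∈ Finset.range (T + 1), (t + 1 : ℝ) * γ ^ t) := by
    calc ∑ t ∈ Finset.range (T + 1),
        γ ^ t * (2 * rmax * ((∑ k ∈ Finset.range (t+1), δ k) + (t + 1 : ℝ) * ε))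
        = ∑ t ∈ Finset.range (T + 1),
            2 * rmax * (γ ^ t * (∑ k ∈ Finset.range (t+1), δ k) + ε * ((t + 1 : ℝ) * γ ^ t)) :=
          Finset.sum_congr rfl (fun t _ => by ring)
      _ = 2 * rmax * ((∑ t ∈ Finset.range (T + 1), γ ^ t * ∑ k ∈ Finset.range (t+1), δ k)
          + ε * ∑ t ∈ Finset.range (T + 1), (t + 1 : ℝ) * γ ^ t) := by
          rw [← Finset.mul_sum, Finset.sum_add_distrib, ← Finset.mul_sum]
  rw [hsplit]
  have hswap : ∑ t ∈ Finset.range (T + 1), γ ^ t * ∑ k ∈ Finset.range (t+1), δ k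
      = ∑ k ∈ Finset.range (T + 1), δ k * ∑ t ∈ Finset.Ico k (T+1), γ ^ t := by
    simp only [Finset.mul_sum]
    rw [Finset.sum_comm' (t' := Finset.range (T+1)) (s' := fun k => Finset.Ico k (T+1))]
    · apply Finset.sum_congr rfl; intro k _
      apply Finset.sum_congr rfl; intro t _; ring
    · intro t k
      simp only [Finset.mem_range, Finset.mem_Ico]
      omega
  have hA : ∑ k ∈ Finset.range (T + 1), δ k * ∑ t ∈ Finset.Ico k (T+1), γ ^ t
      ≤ (1 / (1 - γ)) * ∑ t ∈ Finset.range (T + 1), γ ^ t * δ t := by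
    rw [Finset.mul_sum]
    apply Finset.sum_le_sum
    intro k hk
    have hIco : ∑ t ∈ Finset.Ico k (T+1), γ ^ t = γ ^ k * ∑ j ∈ Finset.range (T+1-k), γ ^ j := by
      rw [Finset.sum_Ico_eq_sum_range, Finset.mul_sum]
      apply Finset.sum_congr rfl; intro j _
      rw [pow_add]
    rw [hIco]
    have := geo_sum_le hγle hγ1 (T+1-k)
    calc δ k * (γ ^ k * ∑ j ∈ Finset.range (T+1-k), γ ^ j)
        ≤ δ k * (γ ^ k * (1 / (1 - γ))) := by
          apply mul_le_mul_of_nonneg_left _ (hδ k)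
          exact mul_le_mul_of_nonneg_left this (pow_nonneg hγle k)
      _ = 1 / (1 - γ) * (γ ^ k * δ k) := by ring
  have hB : ∑ t ∈ Finset.range (T + 1), (t + 1 : ℝ) * γ ^ t ≤ 1 / (1 - γ) ^ 2 :=
    arith_geo_sum_le hγle hγ1 (T+1)
  rw [hswap]
  have := mul_le_mul_of_nonneg_left hB hε
  calc 2 * rmax * ((∑ k ∈ Finset.range (T + 1), δ k * ∑ t ∈ Finset.Ico k (T+1), γ ^ t)
          + ε * ∑ t ∈ Finset.range (T + 1), (t + 1 : ℝ) * γ ^ t)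
      ≤ 2 * rmax * ((1 / (1 - γ)) * (∑ t ∈ Finset.range (T + 1), γ ^ t * δ t)
          + ε * (1 / (1 - γ) ^ 2)) := by
        apply mul_le_mul_of_nonneg_left _ (by linarith)
        linarith
    _ = 2 * rmax * (ε / (1 - γ) ^ 2
          + (1 / (1 - γ)) * ∑ t ∈ Finset.range (T + 1), γ ^ t * δ t) := by ring
end

section
/- (Model-based performance bound) Suppose D_TV[p_0, p̃_0] = δ_0 and for t ≥ 1 the per-step model error satisfies E_{(s,a)∼p̃_{t-1}^π}[D_TV[p(·|s,a), p̃(·|s,a)]] ≤ δ_t, where p_t^π and p̃_t^π are the step-t state-action distributions under policy π in dynamics p and p̃ respectively (evolving by the Markov kernels induced by the dynamics and the same policy π). If |r(s,a)| ≤ r_max, then for the discounted returns J(π) = Σ_{t=0}^∞ γ^t E_{p_t^π}[r] and J̃(π) = Σ_{t=0}^∞ γ^t E_{p̃_t^π}[r], we have J(π) ≥ J̃(π) - (2 r_max / (1-γ)) Σ_{t=0}^∞ γ^t δ_t, provided the series Σ γ^t δ_t converges. -/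
/-- The state-action distribution at step `t` under dynamics `P` (kernel from
state-action pairs to states), policy `π`, and initial state distribution `p0`. -/
noncomputable def saDist {S A : Type*} [Fintype S] [Fintype A]
    (P : S × A → S → ℝ) (π : S → A → ℝ) (p0 : S → ℝ) : ℕ → S × A → ℝ
  | 0 => fun sa => p0 sa.1 * π sa.1 sa.2
  | t + 1 => fun sa => (∑ sa', P sa' sa.1 * saDist P π p0 t sa') * π sa.1 sa.2

open Finset

section TotalVariation

variable {X Y : Type*} [Fintype X] [Fintype Y]

theorem abs_sum_mul_sub_sum_mul_le_tv (r μ ν : X → ℝ) {C : ℝ} (hr : ∀ x, |r x| ≤ C) :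
    |∑ x, r x * μ x - ∑ x, r x * ν x| ≤ 2 * C * tv μ ν := by
  calc |∑ x, r x * μ x - ∑ x, r x * ν x| = |∑ x, r x * (μ x - ν x)| := by
        simp only [mul_sub, sum_sub_distrib]
    _ ≤ ∑ x, |r x| * |μ x - ν x| := by
        simpa only [abs_mul] using abs_sum_le_sum_abs (fun x => r x * (μ x - ν x)) univ
    _ ≤ ∑ x, C * |μ x - ν x| :=
        sum_le_sum fun x _ => mul_le_mul_of_nonneg_right (hr x) (abs_nonneg _)
    _ = 2 * C * tv μ ν := by rw [tv, ← mul_sum]; ring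

theorem abs_sum_mul_le_of_abs_le (r μ : X → ℝ) {C : ℝ} (hr : ∀ x, |r x| ≤ C)
    (hμ0 : ∀ x, 0 ≤ μ x) (hμ1 : ∑ x, μ x = 1) : |∑ x, r x * μ x| ≤ C := by
  calc |∑ x, r x * μ x| ≤ ∑ x, |r x| * μ x := by
        simpa only [abs_mul, abs_of_nonneg (hμ0 _)] using
          abs_sum_le_sum_abs (fun x => r x * μ x) univ
    _ ≤ ∑ x, C * μ x := sum_le_sum fun x _ => mul_le_mul_of_nonneg_right (hr x) (hμ0 x)
    _ = C := by rw [← mul_sum, hμ1, mul_one]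

theorem tv_push_le (P Q : X → Y → ℝ) (hP0 : ∀ x y, 0 ≤ P x y) (hP1 : ∀ x, ∑ y, P x y = 1)
    (μ ν : X → ℝ) (hν : ∀ x, 0 ≤ ν x) :
    tv (fun y => ∑ x, P x y * μ x) (fun y => ∑ x, Q x y * ν x)
      ≤ tv μ ν + ∑ x, ν x * tv (P x) (Q x) := by
  have hsplit : ∀ x y, |P x y * μ x - Q x y * ν x|
      ≤ P x y * |μ x - ν x| + |P x y - Q x y| * ν x := fun x y => by
    calc |P x y * μ x - Q x y * ν x| = |P x y * (μ x - ν x) + (P x y - Q x y) * ν x| := by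
          congr 1; ring
      _ ≤ |P x y * (μ x - ν x)| + |(P x y - Q x y) * ν x| := abs_add_le _ _
      _ = P x y * |μ x - ν x| + |P x y - Q x y| * ν x := by
          rw [abs_mul, abs_mul, abs_of_nonneg (hP0 x y), abs_of_nonneg (hν x)]
  have hsum : ∑ y, |∑ x, P x y * μ x - ∑ x, Q x y * ν x|
      ≤ ∑ x, ∑ y, (P x y * |μ x - ν x| + |P x y - Q x y| * ν x) := by
    rw [sum_comm]
    refine sum_le_sum fun y _ => ?_
    rw [← sum_sub_distrib]
    exact (abs_sum_le_sum_abs _ _).trans (sum_le_sum fun x _ => hsplit x y)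
  simp only [sum_add_distrib, ← sum_mul, hP1, one_mul] at hsum
  have hmismatch : ∑ x, ν x * tv (P x) (Q x) = 1 / 2 * ∑ x, (∑ y, |P x y - Q x y|) * ν x := by
    rw [mul_sum]
    exact sum_congr rfl fun x _ => by rw [tv]; ring
  rw [hmismatch, tv, tv]
  linarith

end TotalVariation

section Rollout

variable {S A : Type*} [Fintype S] [Fintype A] {π : S → A → ℝ}

theorem sum_mul_policy (hπ1 : ∀ s, ∑ a, π s a = 1) (g : S → ℝ) :
    ∑ sa : S × A, g sa.1 * π sa.1 sa.2 = ∑ s, g s := by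
  simp only [Fintype.sum_prod_type, ← mul_sum, hπ1, mul_one]

theorem tv_mul_policy (hπ0 : ∀ s a, 0 ≤ π s a) (hπ1 : ∀ s, ∑ a, π s a = 1) (f g : S → ℝ) :
    tv (fun sa : S × A => f sa.1 * π sa.1 sa.2) (fun sa => g sa.1 * π sa.1 sa.2) = tv f g := by
  simp only [tv, ← sub_mul, abs_mul, abs_of_nonneg (hπ0 _ _),
    sum_mul_policy hπ1 fun s => |f s - g s|]

variable {P Q : S × A → S → ℝ} {p0 q0 : S → ℝ}

theorem saDist_nonneg (hP0 : ∀ sa s', 0 ≤ P sa s') (hπ0 : ∀ s a, 0 ≤ π s a)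
    (hp0 : ∀ s, 0 ≤ p0 s) (t : ℕ) (sa : S × A) : 0 ≤ saDist P π p0 t sa := by
  induction t generalizing sa with
  | zero => exact mul_nonneg (hp0 _) (hπ0 _ _)
  | succ t ih =>
    exact mul_nonneg (sum_nonneg fun sa' _ => mul_nonneg (hP0 _ _) (ih sa')) (hπ0 _ _)

theorem sum_saDist_eq_one (hP1 : ∀ sa, ∑ s', P sa s' = 1) (hπ1 : ∀ s, ∑ a, π s a = 1)
    (hp0 : ∑ s, p0 s = 1) (t : ℕ) : ∑ sa, saDist P π p0 t sa = 1 := by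
  induction t with
  | zero => simp only [saDist, sum_mul_policy hπ1, hp0]
  | succ t ih =>
    rw [saDist, sum_mul_policy hπ1 fun s => ∑ sa', P sa' s * saDist P π p0 t sa', sum_comm]
    simp only [← sum_mul, hP1, one_mul, ih]

theorem tv_saDist_succ_le (hP0 : ∀ sa s', 0 ≤ P sa s') (hP1 : ∀ sa, ∑ s', P sa s' = 1)
    (hQ0 : ∀ sa s', 0 ≤ Q sa s') (hπ0 : ∀ s a, 0 ≤ π s a) (hπ1 : ∀ s, ∑ a, π s a = 1)
    (hq0 : ∀ s, 0 ≤ q0 s) (t : ℕ) :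
    tv (saDist P π p0 (t + 1)) (saDist Q π q0 (t + 1))
      ≤ tv (saDist P π p0 t) (saDist Q π q0 t)
        + ∑ sa, saDist Q π q0 t sa * tv (P sa) (Q sa) := by
  rw [saDist, saDist, tv_mul_policy hπ0 hπ1 (fun s => ∑ sa', P sa' s * saDist P π p0 t sa')
    (fun s => ∑ sa', Q sa' s * saDist Q π q0 t sa')]
  exact tv_push_le P Q hP0 hP1 _ _ (saDist_nonneg hQ0 hπ0 hq0 t)

theorem tv_saDist_le_sum (hP0 : ∀ sa s', 0 ≤ P sa s') (hP1 : ∀ sa, ∑ s', P sa s' = 1)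
    (hQ0 : ∀ sa s', 0 ≤ Q sa s') (hπ0 : ∀ s a, 0 ≤ π s a) (hπ1 : ∀ s, ∑ a, π s a = 1)
    (hp0 : ∀ s, 0 ≤ p0 s) (t : ℕ) :
    tv (saDist P π p0 t) (saDist Q π p0 t)
      ≤ ∑ k ∈ range t, ∑ sa, saDist Q π p0 k sa * tv (P sa) (Q sa) := by
  induction t with
  | zero => simp [tv, saDist]
  | succ t ih =>
    rw [sum_range_succ]
    linarith [tv_saDist_succ_le hP0 hP1 hQ0 hπ0 hπ1 hp0 (p0 := p0) t]

end Rollout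

section Discounting

variable {γ : ℝ}

theorem summable_pow_mul_of_abs_le (hγ0 : 0 ≤ γ) (hγ1 : γ < 1) {f : ℕ → ℝ} {C : ℝ}
    (hf : ∀ t, |f t| ≤ C) : Summable fun t => γ ^ t * f t := by
  refine ((summable_geometric_of_lt_one hγ0 hγ1).mul_left C).of_norm_bounded fun t => ?_
  rw [Real.norm_eq_abs, abs_mul, abs_pow, abs_of_nonneg hγ0, mul_comm]
  exact mul_le_mul_of_nonneg_right (hf t) (pow_nonneg hγ0 t)

theorem hasSum_pow_mul_sum_range (hγ0 : 0 ≤ γ) (hγ1 : γ < 1) {f : ℕ → ℝ}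
    (hf : Summable fun k => ‖γ ^ k * f k‖) :
    HasSum (fun n => γ ^ n * ∑ k ∈ range (n + 1), f k) ((∑' k, γ ^ k * f k) / (1 - γ)) := by
  have hgeo : Summable fun j : ℕ => ‖γ ^ j‖ := by
    simpa only [norm_pow, Real.norm_of_nonneg hγ0] using summable_geometric_of_lt_one hγ0 hγ1
  have h := hasSum_sum_range_mul_of_summable_norm hf hgeo
  rw [tsum_geometric_of_lt_one hγ0 hγ1, ← div_eq_mul_inv] at h
  refine h.congr_fun fun n => ?_
  rw [mul_sum]
  refine sum_congr rfl fun k hk => ?_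
  rw [mul_right_comm, ← pow_add, Nat.add_sub_cancel' (Nat.lt_succ_iff.mp (mem_range.mp hk))]

end Discounting

theorem stmt_8_general {S A : Type*} [Fintype S] [Fintype A]
    (P Pm : S × A → S → ℝ) (π : S → A → ℝ) (p0 : S → ℝ)
    (hP0 : ∀ sa s', 0 ≤ P sa s') (hPm0 : ∀ sa s', 0 ≤ Pm sa s')
    (hP1 : ∀ sa, ∑ s', P sa s' = 1) (hPm1 : ∀ sa, ∑ s', Pm sa s' = 1)
    (hπ0 : ∀ s a, 0 ≤ π s a) (hπ1 : ∀ s, ∑ a, π s a = 1)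
    (hp00 : ∀ s, 0 ≤ p0 s) (hp01 : ∑ s, p0 s = 1)
    (r : S × A → ℝ) (rmax : ℝ) (hr : ∀ sa, |r sa| ≤ rmax)
    (γ : ℝ) (hγ : γ ∈ Set.Ioo (0 : ℝ) 1)
    (δ : ℕ → ℝ) (hδ : ∀ t, 0 ≤ δ t)
    (hmodel : ∀ t : ℕ, 1 ≤ t →
      ∑ sa, saDist Pm π p0 (t - 1) sa * tv (P sa) (Pm sa) ≤ δ t)
    (hsum : Summable fun t : ℕ => γ ^ t * δ t) :
    (∑' t : ℕ, γ ^ t * ∑ sa, r sa * saDist P π p0 t sa)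
      ≥ (∑' t : ℕ, γ ^ t * ∑ sa, r sa * saDist Pm π p0 t sa)
        - (2 * rmax / (1 - γ)) * ∑' t : ℕ, γ ^ t * δ t := by
  obtain ⟨hγ0, hγ1⟩ := hγ
  have hdrift : ∀ t, tv (saDist P π p0 t) (saDist Pm π p0 t) ≤ ∑ k ∈ range (t + 1), δ k :=
    fun t => calc
      _ ≤ ∑ k ∈ range t, ∑ sa, saDist Pm π p0 k sa * tv (P sa) (Pm sa) :=
          tv_saDist_le_sum hP0 hP1 hPm0 hπ0 hπ1 hp00 t
      _ ≤ ∑ k ∈ range t, δ (k + 1) :=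
          sum_le_sum fun k _ => by simpa using hmodel (k + 1) (Nat.le_add_left 1 k)
      _ ≤ ∑ k ∈ range (t + 1), δ k := by rw [sum_range_succ']; linarith [hδ 0]
  have hrmax : 0 ≤ rmax := by
    obtain ⟨sa, -, -⟩ := exists_ne_zero_of_sum_ne_zero (s := univ) (f := saDist P π p0 0)
      (by rw [sum_saDist_eq_one hP1 hπ1 hp01]; exact one_ne_zero)
    exact (abs_nonneg _).trans (hr sa)
  have hstep : ∀ t, ∑ sa, r sa * saDist Pm π p0 t sa - ∑ sa, r sa * saDist P π p0 t sa
      ≤ 2 * rmax * ∑ k ∈ range (t + 1), δ k := fun t =>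
    (le_abs_self _).trans <| (abs_sub_comm _ _).trans_le <|
      (abs_sum_mul_sub_sum_mul_le_tv r _ _ hr).trans (by gcongr; exact hdrift t)
  have hJ := summable_pow_mul_of_abs_le hγ0.le hγ1 fun t => abs_sum_mul_le_of_abs_le r _ hr
    (saDist_nonneg hP0 hπ0 hp00 t) (sum_saDist_eq_one hP1 hπ1 hp01 t)
  have hJm := summable_pow_mul_of_abs_le hγ0.le hγ1 fun t => abs_sum_mul_le_of_abs_le r _ hr
    (saDist_nonneg hPm0 hπ0 hp00 t) (sum_saDist_eq_one hPm1 hπ1 hp01 t)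
  have hcauchy := hasSum_pow_mul_sum_range hγ0.le hγ1 (f := δ) <| by
    simpa only [Real.norm_of_nonneg (mul_nonneg (pow_nonneg hγ0.le _) (hδ _))] using hsum
  have hgap : (∑' t : ℕ, γ ^ t * ∑ sa, r sa * saDist Pm π p0 t sa)
      - (∑' t : ℕ, γ ^ t * ∑ sa, r sa * saDist P π p0 t sa)
      ≤ 2 * rmax * ((∑' t : ℕ, γ ^ t * δ t) / (1 - γ)) := by
    rw [← hJm.tsum_sub hJ, ← hcauchy.tsum_eq, ← tsum_mul_left]
    refine (hJm.sub hJ).tsum_le_tsum (fun t => ?_) (hcauchy.summable.mul_left _)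
    linarith [mul_le_mul_of_nonneg_left (hstep t) (pow_nonneg hγ0.le t)]
  rw [ge_iff_le, div_mul_eq_mul_div, mul_div_assoc]
  linarith

/-- Model-based performance bound: the true return is at least the model return
minus `(2 r_max/(1-γ)) Σ_t γ^t δ_t`, where `δ_t` bounds the expected one-step
model error along the model rollout distribution. -/
theorem stmt_8 {S A : Type*} [Fintype S] [Fintype A]
    (P Pm : S × A → S → ℝ) (π : S → A → ℝ) (p0 : S → ℝ)
    (hP0 : ∀ sa s', 0 ≤ P sa s') (hPm0 : ∀ sa s', 0 ≤ Pm sa s')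
    (hP1 : ∀ sa, ∑ s', P sa s' = 1) (hPm1 : ∀ sa, ∑ s', Pm sa s' = 1)
    (hπ0 : ∀ s a, 0 ≤ π s a) (hπ1 : ∀ s, ∑ a, π s a = 1)
    (hp00 : ∀ s, 0 ≤ p0 s) (hp01 : ∑ s, p0 s = 1)
    (r : S × A → ℝ) (rmax : ℝ) (hr : ∀ sa, |r sa| ≤ rmax)
    (γ : ℝ) (hγ : γ ∈ Set.Ioo (0 : ℝ) 1)
    (δ : ℕ → ℝ) (hδ : ∀ t, 0 ≤ δ t) (hδ0 : δ 0 = 0)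
    (hmodel : ∀ t : ℕ, 1 ≤ t →
      ∑ sa, saDist Pm π p0 (t - 1) sa * tv (P sa) (Pm sa) ≤ δ t)
    (hsum : Summable fun t : ℕ => γ ^ t * δ t) :
    (∑' t : ℕ, γ ^ t * ∑ sa, r sa * saDist P π p0 t sa)
      ≥ (∑' t : ℕ, γ ^ t * ∑ sa, r sa * saDist Pm π p0 t sa)
        - (2 * rmax / (1 - γ)) * ∑' t : ℕ, γ ^ t * δ t :=
  stmt_8_general P Pm π p0 hP0 hPm0 hP1 hPm1 hπ0 hπ1 hp00 hp01 r rmax hr γ hγ δ hδ hmodel hsum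
end

section
/- Define Q̃^π_M2AC recursively by Q̃(s,a) = r(s,a) + γ E_{s'∼p(·|s,a), a'∼π(·|s')}[Q̃(s',a')] when M(s,a)=0, and Q̃(s,a) = r̃(s,a) - α ε + γ E_{s'∼p̃(·|s,a), a'∼π(·|s')}[Q̃(s',a')] when M(s,a)=1, where α = 2r_max/(1-γ), ε = max_{M(s,a)=1} D_TV[p(·|s,a) ⊗ r, p̃(·|s,a) ⊗ r̃] and |r̃(s,a) - r(s,a)| is absorbed into ε. Then Q̃^π_M2AC(s,a) ≤ Q^π(s,a) for all (s,a). -/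
private lemma wavg_le {X : Type*} [Fintype X] (w f : X → ℝ) (hw : ∀ x, 0 ≤ w x)
    (c : ℝ) (hf : ∀ x, f x ≤ c) : ∑ x, w x * f x ≤ (∑ x, w x) * c := by
  rw [Finset.sum_mul]
  exact Finset.sum_le_sum fun x _ => mul_le_mul_of_nonneg_left (hf x) (hw x)

private lemma abs_wavg {X : Type*} [Fintype X] (w f : X → ℝ) (hw : ∀ x, 0 ≤ w x)
    (hw1 : ∑ x, w x = 1) (c : ℝ) (hf : ∀ x, |f x| ≤ c) : |∑ x, w x * f x| ≤ c := by
  calc |∑ x, w x * f x| ≤ ∑ x, |w x * f x| := Finset.abs_sum_le_sum_abs _ _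
    _ = ∑ x, w x * |f x| := by
        refine Finset.sum_congr rfl fun x _ => ?_
        rw [abs_mul, abs_of_nonneg (hw x)]
    _ ≤ (∑ x, w x) * c := wavg_le _ _ hw c hf
    _ = c := by rw [hw1, one_mul]

/-- The M2AC value `Q̃^π_M2AC` (the fixed point of the masked/model-penalized
Bellman operator with penalty `α ε`, `α = 2 r_max/(1-γ)`) is a pointwise lower
bound of the true value `Q^π` (the fixed point of the true Bellman operator). -/
theorem stmt_13 {S A : Type*} [Fintype S] [Fintype A]
    (P Pm : S × A → S → ℝ) (π : S → A → ℝ) (M : S × A → Bool)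
    (hP0 : ∀ sa s', 0 ≤ P sa s') (hPm0 : ∀ sa s', 0 ≤ Pm sa s')
    (hP1 : ∀ sa, ∑ s', P sa s' = 1) (hPm1 : ∀ sa, ∑ s', Pm sa s' = 1)
    (hπ0 : ∀ s a, 0 ≤ π s a) (hπ1 : ∀ s, ∑ a, π s a = 1)
    (r : S × A → ℝ) (rmax : ℝ) (hr : ∀ sa, |r sa| ≤ rmax)
    (γ : ℝ) (hγ : γ ∈ Set.Ioo (0 : ℝ) 1)
    (ε : ℝ) (hε0 : 0 ≤ ε)
    (hε : ∀ sa, M sa = true → tv (P sa) (Pm sa) ≤ ε)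
    (α : ℝ) (hα : α = 2 * rmax / (1 - γ))
    (Q Qm : S × A → ℝ)
    -- `Q` is the true action-value: the fixed point of the Bellman operator of `(P, r, π)`
    (hQ : ∀ sa, Q sa
      = r sa + γ * ∑ s', P sa s' * ∑ a', π s' a' * Q (s', a'))
    -- `Qm` is `Q̃^π_M2AC`: the fixed point of the masked, penalized Bellman operator
    (hQm : ∀ sa, Qm sa
      = if M sa
        then r sa - α * ε + γ * ∑ s', Pm sa s' * ∑ a', π s' a' * Qm (s', a')
        else r sa + γ * ∑ s', P sa s' * ∑ a', π s' a' * Qm (s', a')) :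
    ∀ sa, Qm sa ≤ Q sa := by
  obtain ⟨hγ0, hγ1⟩ := hγ
  by_cases hne : Nonempty (S × A)
  · obtain ⟨sa0⟩ := hne
    haveI : Nonempty (S × A) := ⟨sa0⟩
    have huniv : (Finset.univ : Finset (S × A)).Nonempty := Finset.univ_nonempty
    have hrmax : 0 ≤ rmax := le_trans (abs_nonneg _) (hr sa0)
    have h1γ : (0:ℝ) < 1 - γ := by linarith
    -- uniform bound on |Q|
    set B := Finset.univ.sup' huniv (fun sa => |Q sa|) with hBdef
    have hB : ∀ sa, |Q sa| ≤ B := fun sa =>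
      Finset.le_sup' (fun sa => |Q sa|) (Finset.mem_univ sa)
    have hB0 : 0 ≤ B := le_trans (abs_nonneg _) (hB sa0)
    have hVB : ∀ s', |∑ a', π s' a' * Q (s', a')| ≤ B := fun s' =>
      abs_wavg _ _ (hπ0 s') (hπ1 s') B (fun a' => hB _)
    have hBle : (1 - γ) * B ≤ rmax := by
      obtain ⟨sa1, _, hsa1⟩ := Finset.exists_mem_eq_sup' huniv (fun sa => |Q sa|)
      have h1 : |Q sa1| ≤ rmax + γ * B := by
        rw [hQ sa1]
        calc |r sa1 + γ * ∑ s', P sa1 s' * ∑ a', π s' a' * Q (s', a')|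
            ≤ |r sa1| + |γ * ∑ s', P sa1 s' * ∑ a', π s' a' * Q (s', a')| := abs_add_le _ _
          _ ≤ rmax + γ * B := by
              refine add_le_add (hr sa1) ?_
              rw [abs_mul, abs_of_pos hγ0]
              exact mul_le_mul_of_nonneg_left
                (abs_wavg _ _ (hP0 sa1) (hP1 sa1) B hVB) hγ0.le
      have hBeq : B = |Q sa1| := hsa1
      rw [hBeq] at h1 ⊢
      linarith
    -- the maximal gap
    set D := Finset.univ.sup' huniv (fun sa => Qm sa - Q sa) with hDdef
    have hD : ∀ sa, Qm sa - Q sa ≤ D := fun sa =>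
      Finset.le_sup' (fun sa => Qm sa - Q sa) (Finset.mem_univ sa)
    have hVD : ∀ s', (∑ a', π s' a' * Qm (s', a')) - (∑ a', π s' a' * Q (s', a')) ≤ D := by
      intro s'
      have : ∑ a', π s' a' * (Qm (s', a') - Q (s', a')) ≤ (∑ a', π s' a') * D :=
        wavg_le _ _ (hπ0 s') D (fun a' => hD _)
      rw [hπ1 s', one_mul] at this
      calc (∑ a', π s' a' * Qm (s', a')) - (∑ a', π s' a' * Q (s', a'))
          = ∑ a', π s' a' * (Qm (s', a') - Q (s', a')) := by
            rw [← Finset.sum_sub_distrib]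
            exact Finset.sum_congr rfl fun a' _ => (mul_sub _ _ _).symm
        _ ≤ D := this
    have hDγ : D ≤ γ * D := by
      obtain ⟨sa1, _, hsa1⟩ := Finset.exists_mem_eq_sup' huniv (fun sa => Qm sa - Q sa)
      have hDeq : D = Qm sa1 - Q sa1 := hsa1
      have key : Qm sa1 - Q sa1 ≤ γ * D := by
        by_cases hM : M sa1 = true
        · -- masked case
          have htv : ∑ s', |P sa1 s' - Pm sa1 s'| ≤ 2 * ε := by
            have := hε sa1 hM
            rw [tv] at this
            linarith
          have habs : ∀ s', (Pm sa1 s' - P sa1 s') * (∑ a', π s' a' * Q (s', a'))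
              ≤ |P sa1 s' - Pm sa1 s'| * B := by
            intro s'
            calc (Pm sa1 s' - P sa1 s') * (∑ a', π s' a' * Q (s', a'))
                ≤ |(Pm sa1 s' - P sa1 s') * (∑ a', π s' a' * Q (s', a'))| := le_abs_self _
              _ = |Pm sa1 s' - P sa1 s'| * |∑ a', π s' a' * Q (s', a')| := abs_mul _ _
              _ ≤ |P sa1 s' - Pm sa1 s'| * B := by
                  rw [abs_sub_comm]
                  exact mul_le_mul_of_nonneg_left (hVB s') (abs_nonneg _)
          have hshift : (∑ s', Pm sa1 s' * ∑ a', π s' a' * Qm (s', a'))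
              - (∑ s', P sa1 s' * ∑ a', π s' a' * Q (s', a'))
              ≤ D + 2 * ε * B := by
            have hsplit : (∑ s', Pm sa1 s' * ∑ a', π s' a' * Qm (s', a'))
                - (∑ s', P sa1 s' * ∑ a', π s' a' * Q (s', a'))
                = (∑ s', Pm sa1 s' * ((∑ a', π s' a' * Qm (s', a')) - (∑ a', π s' a' * Q (s', a'))))
                  + ∑ s', (Pm sa1 s' - P sa1 s') * (∑ a', π s' a' * Q (s', a')) := by
              rw [← Finset.sum_add_distrib, ← Finset.sum_sub_distrib]
              exact Finset.sum_congr rfl fun s' _ => by ring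
            rw [hsplit]
            have h1 : ∑ s', Pm sa1 s' * ((∑ a', π s' a' * Qm (s', a')) - (∑ a', π s' a' * Q (s', a')))
                ≤ D := by
              have := wavg_le (Pm sa1) _ (hPm0 sa1) D hVD
              rwa [hPm1 sa1, one_mul] at this
            have h2 : ∑ s', (Pm sa1 s' - P sa1 s') * (∑ a', π s' a' * Q (s', a'))
                ≤ 2 * ε * B := by
              calc ∑ s', (Pm sa1 s' - P sa1 s') * (∑ a', π s' a' * Q (s', a'))
                  ≤ ∑ s', |P sa1 s' - Pm sa1 s'| * B :=
                    Finset.sum_le_sum fun s' _ => habs s'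
                _ = (∑ s', |P sa1 s' - Pm sa1 s'|) * B := by rw [Finset.sum_mul]
                _ ≤ 2 * ε * B := mul_le_mul_of_nonneg_right htv hB0
            linarith
          have hεB : γ * (2 * ε * B) ≤ α * ε := by
            have h3 : ε * ((1 - γ) * B) ≤ ε * rmax := mul_le_mul_of_nonneg_left hBle hε0
            have h4 : α * (1 - γ) = 2 * rmax := by
              rw [hα]; field_simp
            have h7 : (1 - γ) * (2 * ε * B) ≤ (1 - γ) * (α * ε) := by nlinarith [h3, h4]
            have h5 : 2 * ε * B ≤ α * ε := le_of_mul_le_mul_left h7 h1γ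
            nlinarith [h5, mul_nonneg hε0 hB0]
          rw [hQm sa1, if_pos hM, hQ sa1]
          have := mul_le_mul_of_nonneg_left hshift hγ0.le
          nlinarith [this, hεB]
        · rw [hQm sa1, if_neg hM, hQ sa1]
          have h1 : ∑ s', P sa1 s' * ((∑ a', π s' a' * Qm (s', a')) - (∑ a', π s' a' * Q (s', a')))
              ≤ D := by
            have := wavg_le (P sa1) _ (hP0 sa1) D hVD
            rwa [hP1 sa1, one_mul] at this
          have hsplit : (∑ s', P sa1 s' * ∑ a', π s' a' * Qm (s', a'))
              - (∑ s', P sa1 s' * ∑ a', π s' a' * Q (s', a'))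
              = ∑ s', P sa1 s' * ((∑ a', π s' a' * Qm (s', a')) - (∑ a', π s' a' * Q (s', a'))) := by
            rw [← Finset.sum_sub_distrib]
            exact Finset.sum_congr rfl fun s' _ => (mul_sub _ _ _).symm
          have h2 : γ * ((∑ s', P sa1 s' * ∑ a', π s' a' * Qm (s', a'))
              - (∑ s', P sa1 s' * ∑ a', π s' a' * Q (s', a'))) ≤ γ * D := by
            rw [hsplit]
            exact mul_le_mul_of_nonneg_left h1 hγ0.le
          linarith
      calc D = Qm sa1 - Q sa1 := hDeq
        _ ≤ γ * D := key
    have hD0 : D ≤ 0 := by nlinarith [hDγ]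
    intro sa
    linarith [hD sa]
  · intro sa
    exact absurd ⟨sa⟩ hne
end
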